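/- Let G be a group and consider tuples (A₁, B₁, …, A_{i−1}, B_{i−1}, A, B, x₁, …, x_k) ∈ G^(2(i−1)+2+k). Set K_j = B_j A_j⁻¹ B_j⁻¹ A_j for j = 1,…,i−1 and w = A⁻¹ B⁻¹ A · K_{i−1} ⋯ K₁. For g ∈ G define ρ(g) : A_j ↦ g A_j g⁻¹ and B_j ↦ g B_j g⁻¹ for j = 1,…,i−1; A ↦ [g,w] A g⁻¹; B ↦ [g,w] B [g,w]⁻¹; x_l ↦ [g,w] x_l [g,w]⁻¹ for l = 1,…,k, where w is computed from the argument tuple and [g,w] = g w g⁻¹ w⁻¹. Then ρ is a left action of G, and the word w is conjugation-equivariant: w evaluated on ρ(g) of a tuple equals g · w · g⁻¹ evaluated on that tuple. -/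

import Mathlib

/-- The group commutator `[x,y] = x y x⁻¹ y⁻¹`. -/
def gcomm {G : Type*} [Group G] (x y : G) : G := x * y * x⁻¹ * y⁻¹

/-!
Conjugating every handle generator by `g` conjugates each `K_j`, hence their product, by `g`;
together with `A ↦ [g,w] A g⁻¹` and `B ↦ [g,w] B [g,w]⁻¹` this turns `w` into `g w g⁻¹`.
The action law then reduces to the cocycle identity
`[g₁ g₂, w] = [g₁, g₂ w g₂⁻¹] [g₂, w]`, since the second action sees the word `g₂ w g₂⁻¹`.
-/

section

variable {G : Type*} [Group G]

@[simp]
theorem gcomm_one_left (w : G) : gcomm 1 w = 1 := by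
  simp [gcomm]

theorem gcomm_mul_left (g₁ g₂ w : G) :
    gcomm (g₁ * g₂) w = gcomm g₁ (g₂ * w * g₂⁻¹) * gcomm g₂ w := by
  simp only [gcomm]
  group

theorem List.prod_reverse_ofFn_conj {n : ℕ} (g : G) (f : Fin n → G) :
    (List.ofFn fun j => g * f j * g⁻¹).reverse.prod = g * (List.ofFn f).reverse.prod * g⁻¹ := by
  have h := map_list_prod (MulAut.conj g) (List.ofFn f).reverse
  simpa only [List.map_reverse, List.map_ofFn, Function.comp_def, MulAut.conj_apply] using h.symm

end

/-- With `K_j = B_j A_j⁻¹ B_j⁻¹ A_j` and `w = A⁻¹ B⁻¹ A · K_{p} ⋯ K_1`, the map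
`ρ(g)` sending `A_j ↦ g A_j g⁻¹`, `B_j ↦ g B_j g⁻¹`, `A ↦ [g,w] A g⁻¹`,
`B ↦ [g,w] B [g,w]⁻¹` and `x_l ↦ [g,w] x_l [g,w]⁻¹` is a left action of `G`, and the
word `w` is conjugation-equivariant. -/
theorem action_for_curve_epsilon {G : Type*} [Group G] {p k : ℕ}
    (K : (Fin p → G) → (Fin p → G) → Fin p → G)
    (hK : ∀ Ah Bh j, K Ah Bh j = Bh j * (Ah j)⁻¹ * (Bh j)⁻¹ * Ah j)
    (w : (Fin p → G) → (Fin p → G) → G → G → G)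
    (hw : ∀ Ah Bh A B,
      w Ah Bh A B = A⁻¹ * B⁻¹ * A * (List.ofFn (K Ah Bh)).reverse.prod)
    (ρ : G → ((Fin p → G) × (Fin p → G) × G × G × (Fin k → G)) →
          ((Fin p → G) × (Fin p → G) × G × G × (Fin k → G)))
    (hρ : ∀ (g : G) (Ah Bh : Fin p → G) (A B : G) (x : Fin k → G),
      ρ g (Ah, Bh, A, B, x) =
        (fun j => g * Ah j * g⁻¹,
         fun j => g * Bh j * g⁻¹,
         gcomm g (w Ah Bh A B) * A * g⁻¹,
         gcomm g (w Ah Bh A B) * B * (gcomm g (w Ah Bh A B))⁻¹,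
         fun l => gcomm g (w Ah Bh A B) * x l * (gcomm g (w Ah Bh A B))⁻¹)) :
    (∀ q, ρ 1 q = q) ∧ (∀ g₁ g₂ q, ρ (g₁ * g₂) q = ρ g₁ (ρ g₂ q)) ∧
    (∀ (g : G) (Ah Bh : Fin p → G) (A B : G) (x : Fin k → G),
      w (ρ g (Ah, Bh, A, B, x)).1 (ρ g (Ah, Bh, A, B, x)).2.1
          (ρ g (Ah, Bh, A, B, x)).2.2.1 (ρ g (Ah, Bh, A, B, x)).2.2.2.1
        = g * w Ah Bh A B * g⁻¹) := by
  have K_conj : ∀ (g : G) Ah Bh,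
      K (fun j => g * Ah j * g⁻¹) (fun j => g * Bh j * g⁻¹) = fun j => g * K Ah Bh j * g⁻¹ := by
    intro g Ah Bh
    funext j
    simp only [hK]
    group
  have w_conj : ∀ (g : G) Ah Bh A B,
      w (fun j => g * Ah j * g⁻¹) (fun j => g * Bh j * g⁻¹)
        (gcomm g (w Ah Bh A B) * A * g⁻¹)
        (gcomm g (w Ah Bh A B) * B * (gcomm g (w Ah Bh A B))⁻¹) = g * w Ah Bh A B * g⁻¹ := by
    intro g Ah Bh A B
    rw [hw, K_conj, List.prod_reverse_ofFn_conj, hw Ah Bh A B, gcomm]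
    group
  refine ⟨?_, ?_, fun g Ah Bh A B x => by rw [hρ]; exact w_conj g Ah Bh A B⟩
  · rintro ⟨Ah, Bh, A, B, x⟩
    simp [hρ]
  · rintro g₁ g₂ ⟨Ah, Bh, A, B, x⟩
    rw [hρ, hρ, hρ, w_conj, gcomm_mul_left]
    simp only [Prod.mk.injEq, funext_iff]
    refine ⟨fun j => ?_, fun j => ?_, ?_, ?_, fun l => ?_⟩ <;> group
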